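/- arXiv:1610.02339 — 4 statements merged into one kernel-verified Lean document; each statement's English description precedes it below -/
import Mathlib

section
/- In the secure scalar product protocol, if r_A = Dec(w·Enc(-r_B)) where w = ∏ Enc(xᵢ)^{yᵢ}, then r_A + r_B = ∑ xᵢyᵢ, i.e., the two parties' outputs sum to the true scalar product. -/
/-- The unit law comes for free: in a group, `f 1 = f 1 + f 1` forces `f 1 = 0`. -/
def AddMonoidHom.ofMapMul {M G : Type*} [Monoid M] [AddGroup G] (f : M → G)
    (hf : ∀ a b, f (a * b) = f a + f b) : Additive M →+ G :=
  AddMonoidHom.mk' (fun a => f a.toMul) fun a b => hf a.toMul b.toMul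

theorem map_prod_of_map_mul {ι M G : Type*} [CommMonoid M] [AddCommGroup G] (f : M → G)
    (hf : ∀ a b, f (a * b) = f a + f b) (s : Finset ι) (g : ι → M) :
    f (∏ i ∈ s, g i) = ∑ i ∈ s, f (g i) :=
  map_sum (AddMonoidHom.ofMapMul f hf) (fun i => Additive.ofMul (g i)) s

theorem map_pow_of_map_mul {M G : Type*} [Monoid M] [AddGroup G] (f : M → G)
    (hf : ∀ a b, f (a * b) = f a + f b) (a : M) (k : ℕ) :
    f (a ^ k) = k • f a :=
  map_nsmul (AddMonoidHom.ofMapMul f hf) k (Additive.ofMul a)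

theorem stmt_8_general {P C : Type*} [AddCommGroup P] [CommMonoid C]
    (Enc : P → C) (Dec : C → P)
    (hDecEnc : ∀ a : P, Dec (Enc a) = a)
    (hDec_mul : ∀ u v : C, Dec (u * v) = Dec u + Dec v)
    {n : ℕ} (x : Fin n → P) (y : Fin n → ℕ) (rB : P)
    (w : C) (hw : w = ∏ i, Enc (x i) ^ (y i))
    (rA : P) (hrA : rA = Dec (w * Enc (-rB))) :
    rA + rB = ∑ i, y i • x i := by
  have hDec_w : Dec w = ∑ i, y i • x i := by
    simp only [hw, map_prod_of_map_mul Dec hDec_mul, map_pow_of_map_mul Dec hDec_mul, hDecEnc]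
  rw [hrA, hDec_mul, hDecEnc, hDec_w, neg_add_cancel_right]

theorem stmt_8 {P C : Type*} [AddCommGroup P] [CommMonoid C]
    (Enc : P → C) (Dec : C → P)
    (hDecEnc : ∀ a : P, Dec (Enc a) = a)
    (hDec_mul : ∀ u v : C, Dec (u * v) = Dec u + Dec v)
    (hDec_pow : ∀ (u : C) (k : ℕ), Dec (u ^ k) = k • Dec u)
    {n : ℕ} (x : Fin n → P) (y : Fin n → ℕ) (rB : P)
    (w : C) (hw : w = ∏ i, Enc (x i) ^ (y i))
    (rA : P) (hrA : rA = Dec (w * Enc (-rB))) :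
    rA + rB = ∑ i, y i • x i :=
  stmt_8_general Enc Dec hDecEnc hDec_mul x y rB w hw rA hrA
end

section
/- Let Q₁ and Q₂ be n×n invertible matrices. If y* solves min (cᵀQ₂Q₁)y subject to (MQ₂Q₁)y ≤ B, y ≥ 0 (with Q₂Q₁ monomial with positive entries), then x* = Q₂Q₁y* solves the original LP min cᵀx subject to Mx ≤ B, x ≥ 0. -/
open Matrix

def IsPosMonomial {n : ℕ} (Q : Matrix (Fin n) (Fin n) ℝ) : Prop :=
  ∃ (σ : Equiv.Perm (Fin n)) (d : Fin n → ℝ), (∀ j, 0 < d j) ∧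
    ∀ i j, Q i j = if i = σ j then d j else 0

lemma monomial_mulVec {n : ℕ} (Q : Matrix (Fin n) (Fin n) ℝ)
    (σ : Equiv.Perm (Fin n)) (d : Fin n → ℝ)
    (hQ : ∀ i j, Q i j = if i = σ j then d j else 0) (v : Fin n → ℝ) (i : Fin n) :
    (Q *ᵥ v) i = d (σ.symm i) * v (σ.symm i) := by
  simp only [mulVec, dotProduct, hQ, ite_mul, zero_mul]
  rw [Finset.sum_eq_single (σ.symm i)]
  · simp
  · intro b _ hb
    rw [if_neg]
    intro h
    exact hb (by simp [h])
  · simp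

theorem stmt_9 {m n : ℕ} (M₁ M₂ : Matrix (Fin m) (Fin n) ℝ) (B : Fin m → ℝ)
    (c₁ c₂ : Fin n → ℝ) (Q₁ Q₂ : Matrix (Fin n) (Fin n) ℝ)
    (hQ₁ : IsUnit Q₁) (hQ₂ : IsUnit Q₂)
    (hmono : IsPosMonomial (Q₂ * Q₁))
    (M : Matrix (Fin m) (Fin n) ℝ) (hM : M = M₁ + M₂)
    (c : Fin n → ℝ) (hc : c = c₁ + c₂)
    (ystar : Fin n → ℝ)
    (hfeas : (M * (Q₂ * Q₁)) *ᵥ ystar ≤ B ∧ 0 ≤ ystar)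
    (hopt : ∀ y : Fin n → ℝ, (M * (Q₂ * Q₁)) *ᵥ y ≤ B → 0 ≤ y →
      (c ᵥ* (Q₂ * Q₁)) ⬝ᵥ ystar ≤ (c ᵥ* (Q₂ * Q₁)) ⬝ᵥ y) :
    (M *ᵥ ((Q₂ * Q₁) *ᵥ ystar) ≤ B ∧ 0 ≤ (Q₂ * Q₁) *ᵥ ystar) ∧
      ∀ x : Fin n → ℝ, M *ᵥ x ≤ B → 0 ≤ x →
        c ⬝ᵥ ((Q₂ * Q₁) *ᵥ ystar) ≤ c ⬝ᵥ x := by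
  obtain ⟨σ, d, hd, hQ⟩ := hmono
  set Q := Q₂ * Q₁ with hQdef
  refine ⟨⟨by rw [mulVec_mulVec]; exact hfeas.1, ?_⟩, ?_⟩
  · intro i
    rw [Pi.zero_apply, monomial_mulVec Q σ d hQ]
    exact mul_nonneg (hd _).le (hfeas.2 _)
  · intro x hxB hx0
    set y : Fin n → ℝ := fun j => x (σ j) / d j with hy
    have hQy : Q *ᵥ y = x := by
      funext i
      rw [monomial_mulVec Q σ d hQ]
      simp [hy]; rw [mul_div_cancel₀ _ (hd (σ.symm i)).ne']
    have h1 : (M * Q) *ᵥ y ≤ B := by rw [← mulVec_mulVec, hQy]; exact hxB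
    have h2 : 0 ≤ y := fun j => div_nonneg (hx0 _) (hd j).le
    have := hopt y h1 h2
    rwa [← dotProduct_mulVec, ← dotProduct_mulVec, hQy] at this
end

section
/- With M = M₁ + M₂ and homomorphic encryption under P₁'s key, the ciphertext matrix computed as Enc(M₁)·Enc(M₂) entrywise, then exponentiated by Q₂ and subsequently by Q₁ as in Algorithm 3, decrypts to (M₁ + M₂)Q₂Q₁. -/
lemma dec_prod {P C : Type*} [AddCommGroup P] [CommMonoid C]
    (Dec : C → P) (hDec_mul : ∀ u v : C, Dec (u * v) = Dec u + Dec v)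
    {ι : Type*} (s : Finset ι) (f : ι → C) :
    Dec (∏ x ∈ s, f x) = ∑ x ∈ s, Dec (f x) := by
  classical
  have h1 : Dec 1 = 0 := by
    have := hDec_mul 1 1
    simp at this
    exact this
  induction s using Finset.induction with
  | empty => simpa using h1
  | insert hx ih => simp_all [hDec_mul]

theorem stmt_17 {P C : Type*} [AddCommGroup P] [CommMonoid C]
    (Enc : P → C) (Dec : C → P)
    (hDecEnc : ∀ a : P, Dec (Enc a) = a)
    (hDec_mul : ∀ u v : C, Dec (u * v) = Dec u + Dec v)
    (hDec_pow : ∀ (u : C) (k : ℕ), Dec (u ^ k) = k • Dec u)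
    {m n : ℕ} (M₁ M₂ : Matrix (Fin m) (Fin n) P)
    (Q₂ Q₁ : Matrix (Fin n) (Fin n) ℕ) :
    ∀ (i : Fin m) (j : Fin n),
      Dec (∏ k, (∏ h, (Enc (M₁ i h) * Enc (M₂ i h)) ^ (Q₂ h k)) ^ (Q₁ k j))
        = ∑ k, Q₁ k j • (∑ h, Q₂ h k • (M₁ i h + M₂ i h)) := by
  intro i j
  rw [dec_prod Dec hDec_mul]
  refine Finset.sum_congr rfl fun k _ => ?_
  rw [hDec_pow, dec_prod Dec hDec_mul]
  congr 1
  refine Finset.sum_congr rfl fun h _ => ?_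
  rw [hDec_pow, hDec_mul, hDecEnc, hDecEnc]
end

section
/- Let Q = Q₁Q₂⋯Q_l be a product of positive monomial matrices held by l parties, M = ∑ᵢ Mᵢ, c = ∑ᵢ cᵢ. If y* solves the transformed LP {min (cᵀQ)y : (MQ)y ≤ B, y ≥ 0}, then x* = Qy* = Q₁⋯Q_l y* solves the original LP {min cᵀx : Mx ≤ B, x ≥ 0}. -/
/-!
A positive monomial matrix `Q` (a permutation matrix with positive weights) maps the nonnegative
orthant bijectively onto itself, and this class is closed under products. Hence `x = Q y` is a
bijection between the feasible sets of the two programs, under which the objectives agree: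
`c ⬝ᵥ Q y = (c ᵥ* Q) ⬝ᵥ y`.
-/

open Matrix

def IsLPOptimal {R m n : Type*} [Fintype n] [NonUnitalNonAssocSemiring R] [Preorder R]
    (M : Matrix m n R) (B : m → R) (c : n → R) (x : n → R) : Prop :=
  (M *ᵥ x ≤ B ∧ 0 ≤ x) ∧ ∀ x' : n → R, M *ᵥ x' ≤ B → 0 ≤ x' → c ⬝ᵥ x ≤ c ⬝ᵥ x'

theorem IsLPOptimal.mulVec {R m n : Type*} [Fintype n] [CommSemiring R] [Preorder R]
    {M : Matrix m n R} {Q : Matrix n n R} {B : m → R} {c y : n → R}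
    (hQ_nonneg : ∀ y : n → R, 0 ≤ y → 0 ≤ Q *ᵥ y)
    (hQ_surj : ∀ x : n → R, 0 ≤ x → ∃ y, 0 ≤ y ∧ Q *ᵥ y = x)
    (hy : IsLPOptimal (M * Q) B (c ᵥ* Q) y) :
    IsLPOptimal M B c (Q *ᵥ y) := by
  obtain ⟨⟨hy_le, hy_nonneg⟩, hy_opt⟩ := hy
  refine ⟨⟨by rwa [mulVec_mulVec], hQ_nonneg y hy_nonneg⟩, fun x hx_le hx_nonneg => ?_⟩
  obtain ⟨y', hy'_nonneg, rfl⟩ := hQ_surj x hx_nonneg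
  simpa only [dotProduct_mulVec] using hy_opt y' (by rwa [← mulVec_mulVec]) hy'_nonneg

namespace IsPosMonomial

variable {n : ℕ}

theorem one : IsPosMonomial (1 : Matrix (Fin n) (Fin n) ℝ) :=
  ⟨1, fun _ => 1, fun _ => one_pos, fun i j => by rw [one_apply]; rfl⟩

theorem mul {A B : Matrix (Fin n) (Fin n) ℝ} (hA : IsPosMonomial A) (hB : IsPosMonomial B) :
    IsPosMonomial (A * B) := by
  obtain ⟨σ, d, hd, hA⟩ := hA
  obtain ⟨τ, e, he, hB⟩ := hB
  refine ⟨σ * τ, fun j => d (τ j) * e j, fun j => mul_pos (hd _) (he _), fun i j => ?_⟩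
  rw [mul_apply, Finset.sum_eq_single (τ j) (fun k _ hk => by simp [hB, hk]) (by simp)]
  rw [hA, hB, if_pos rfl, ite_mul, zero_mul]
  rfl

theorem list_prod {L : List (Matrix (Fin n) (Fin n) ℝ)} (h : ∀ A ∈ L, IsPosMonomial A) :
    IsPosMonomial L.prod :=
  List.prod_induction _ (fun _ _ => mul) one h

theorem mulVec_apply {Q : Matrix (Fin n) (Fin n) ℝ} {σ : Equiv.Perm (Fin n)} {d : Fin n → ℝ}
    (hQ : ∀ i j, Q i j = if i = σ j then d j else 0) (y : Fin n → ℝ) (i : Fin n) :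
    (Q *ᵥ y) i = d (σ.symm i) * y (σ.symm i) := by
  rw [mulVec, dotProduct, Finset.sum_eq_single (σ.symm i) _ (by simp)]
  · simp [hQ]
  · intro k _ hk
    rw [hQ, if_neg (by rintro rfl; simp at hk), zero_mul]

theorem mulVec_nonneg {Q : Matrix (Fin n) (Fin n) ℝ} (hQ : IsPosMonomial Q) {y : Fin n → ℝ}
    (hy : 0 ≤ y) : 0 ≤ Q *ᵥ y := by
  obtain ⟨σ, d, hd, hQ⟩ := hQ
  intro i
  rw [mulVec_apply hQ]
  exact mul_nonneg (hd _).le (hy _)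

theorem exists_nonneg_mulVec_eq {Q : Matrix (Fin n) (Fin n) ℝ} (hQ : IsPosMonomial Q)
    {x : Fin n → ℝ} (hx : 0 ≤ x) : ∃ y, 0 ≤ y ∧ Q *ᵥ y = x := by
  obtain ⟨σ, d, hd, hQ⟩ := hQ
  refine ⟨fun j => x (σ j) / d j, fun j => div_nonneg (hx _) (hd _).le, funext fun i => ?_⟩
  rw [mulVec_apply hQ, mul_div_cancel₀ _ (hd _).ne', Equiv.apply_symm_apply]

end IsPosMonomial

theorem stmt_19_general {l m n : ℕ}
    (B : Fin m → ℝ)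
    (Qs : Fin l → Matrix (Fin n) (Fin n) ℝ)
    (hQs : ∀ i, IsPosMonomial (Qs i))
    (Q : Matrix (Fin n) (Fin n) ℝ) (hQ : Q = (List.ofFn Qs).prod)
    (M : Matrix (Fin m) (Fin n) ℝ)
    (c : Fin n → ℝ)
    (ystar : Fin n → ℝ)
    (hfeas : (M * Q) *ᵥ ystar ≤ B ∧ 0 ≤ ystar)
    (hopt : ∀ y : Fin n → ℝ, (M * Q) *ᵥ y ≤ B → 0 ≤ y →
      (c ᵥ* Q) ⬝ᵥ ystar ≤ (c ᵥ* Q) ⬝ᵥ y) :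
    (M *ᵥ (Q *ᵥ ystar) ≤ B ∧ 0 ≤ Q *ᵥ ystar) ∧
      ∀ x : Fin n → ℝ, M *ᵥ x ≤ B → 0 ≤ x →
        c ⬝ᵥ (Q *ᵥ ystar) ≤ c ⬝ᵥ x := by
  have hQ_pm : IsPosMonomial Q :=
    hQ ▸ IsPosMonomial.list_prod (List.forall_mem_ofFn_iff.mpr hQs)
  exact IsLPOptimal.mulVec (fun _ => hQ_pm.mulVec_nonneg)
    (fun _ => hQ_pm.exists_nonneg_mulVec_eq) ⟨hfeas, hopt⟩

theorem stmt_19 {l m n : ℕ} (Ms : Fin l → Matrix (Fin m) (Fin n) ℝ)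
    (cs : Fin l → (Fin n → ℝ)) (B : Fin m → ℝ)
    (Qs : Fin l → Matrix (Fin n) (Fin n) ℝ)
    (hQs : ∀ i, IsPosMonomial (Qs i))
    (Q : Matrix (Fin n) (Fin n) ℝ) (hQ : Q = (List.ofFn Qs).prod)
    (M : Matrix (Fin m) (Fin n) ℝ) (hM : M = ∑ i, Ms i)
    (c : Fin n → ℝ) (hc : c = ∑ i, cs i)
    (ystar : Fin n → ℝ)
    (hfeas : (M * Q) *ᵥ ystar ≤ B ∧ 0 ≤ ystar)
    (hopt : ∀ y : Fin n → ℝ, (M * Q) *ᵥ y ≤ B → 0 ≤ y →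
      (c ᵥ* Q) ⬝ᵥ ystar ≤ (c ᵥ* Q) ⬝ᵥ y) :
    (M *ᵥ (Q *ᵥ ystar) ≤ B ∧ 0 ≤ Q *ᵥ ystar) ∧
      ∀ x : Fin n → ℝ, M *ᵥ x ≤ B → 0 ≤ x →
        c ⬝ᵥ (Q *ᵥ ystar) ≤ c ⬝ᵥ x :=
  stmt_19_general B Qs hQs Q hQ M c ystar hfeas hopt
end
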